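/- (Necessity of the schedulability condition) Let z_i = D − (1/f_M)·∑_{k=i}^N w_k. If task T_i starts at a time t ∈ [0, z_i) with S_i(t) < w_i/(z_{i+1} − t), and tasks T_i, ..., T_N all use their worst-case cycles (c_k = w_k for all k ≥ i), with each T_k (k > i) run at frequency at most f_M, then T_N finishes strictly after D. -/
import Mathlib


open Finset in
/-- Necessity of the schedulability condition (simple rigorous form): if task
`T i` starts at a time `t ∈ [0, z i)` with `S i t < w i / (z (i+1) − t)`, and
tasks `T i, …, T N` all use their worst-case cycles, the later tasks being run
at frequencies `g k ≤ f_M`, then `T N` finishes strictly after `D`. -/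
theorem stmt6 (N : ℕ) (w : ℕ → ℝ) (D fM : ℝ)
    (hD : 0 < D) (hfM : 0 < fM) (hw : ∀ k ∈ Icc 1 N, 0 < w k)
    (z : ℕ → ℝ) (hz : ∀ i, z i = D - (1 / fM) * ∑ k ∈ Icc i N, w k)
    (S : ℕ → ℝ → ℝ) (g : ℕ → ℝ)
    (i : ℕ) (hi : i ∈ Icc 1 N) (t : ℝ) (ht0 : 0 ≤ t) (htz : t < z i)
    (hSpos : 0 < S i t) (hviol : S i t < w i / (z (i + 1) - t))
    (hg : ∀ k ∈ Icc (i + 1) N, 0 < g k ∧ g k ≤ fM)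
    (θ : ℕ → ℝ) (hθi : θ i = t)
    (hstep1 : θ (i + 1) = t + w i / S i t)
    (hstep : ∀ k ∈ Icc (i + 1) N, θ (k + 1) = θ k + w k / g k) :
    θ (N + 1) > D := by
  simp only [Finset.mem_Icc] at hi
  obtain ⟨hi1, hiN⟩ := hi
  -- z recurrence: z (k+1) = z k + w k / fM for k ≤ N
  have hzstep : ∀ k, k ≤ N → z (k + 1) = z k + w k / fM := by
    intro k hk
    rw [hz, hz]
    have : Finset.Icc k N = insert k (Finset.Icc (k+1) N) := by
      ext x; simp only [Finset.mem_Icc, Finset.mem_insert]; omega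
    rw [this, Finset.sum_insert (by simp)]
    field_simp
    ring
  have hwi : 0 < w i := hw i (Finset.mem_Icc.mpr ⟨hi1, hiN⟩)
  have hzi1 : z i < z (i + 1) := by
    rw [hzstep i hiN]; nlinarith [div_pos hwi hfM]
  have hzt : 0 < z (i + 1) - t := by linarith
  -- base: θ (i+1) > z (i+1)
  have hbase : z (i + 1) < θ (i + 1) := by
    rw [hstep1]
    have h1 : S i t * (z (i + 1) - t) < w i := by
      have := (lt_div_iff₀ hzt).mp hviol
      linarith
    have : z (i + 1) - t < w i / S i t := (lt_div_iff₀ hSpos).mpr (by linarith [h1])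
    linarith
  -- induction
  have key : ∀ m, i + 1 + m ≤ N + 1 → z (i + 1 + m) < θ (i + 1 + m) := by
    intro m
    induction m with
    | zero => intro _; simpa using hbase
    | succ n ih =>
      intro hle
      set k := i + 1 + n with hk
      have hkN : k ≤ N := by omega
      have hk1 : i + 1 ≤ k := by omega
      have hkmem : k ∈ Finset.Icc (i + 1) N := Finset.mem_Icc.mpr ⟨hk1, hkN⟩
      have hwk : 0 < w k := hw k (Finset.mem_Icc.mpr ⟨by omega, hkN⟩)
      obtain ⟨hg0, hgM⟩ := hg k hkmem
      have hdiv : w k / fM ≤ w k / g k :=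
        div_le_div_of_nonneg_left hwk.le hg0 hgM
      have h1 : i + 1 + (n + 1) = k + 1 := by omega
      rw [h1, hstep k hkmem, hzstep k hkN]
      have := ih (by omega)
      linarith
  have hfin : z (N + 1) < θ (N + 1) := by
    have h := key (N - i) (by omega)
    have : i + 1 + (N - i) = N + 1 := by omega
    rwa [this] at h
  have : z (N + 1) = D := by
    rw [hz]; simp
  linarith
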